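/- arXiv:2003.04744 — 4 statements merged into one kernel-verified Lean document; each statement's English description precedes it below -/
import Mathlib

section
/- Let F be a field of odd characteristic with i ∈ F satisfying i^2 = -1. For a = (x1,y1,z1), b = (x2,y2,z2) ∈ F^3 and r1, r2 ∈ F, let P_j = (1, r_j - z_j, x_j - i·y_j, r_j^2 - x_j^2 - y_j^2 - z_j^2, -(r_j + z_j), x_j + i·y_j) for j = 1, 2. Writing P_j = (ω_j, v_j) with ω_j, v_j ∈ F^3, we have ω_1 · v_2 + ω_2 · v_1 = 0 if and only if (x1 - x2)^2 + (y1 - y2)^2 + (z1 - z2)^2 = (r1 - r2)^2. -/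
/-- Standard dot product on triples. -/
def dot3 {F : Type*} [Field F] (u v : F × F × F) : F :=
  u.1 * v.1 + u.2.1 * v.2.1 + u.2.2 * v.2.2

/-- Zahl's identity: the Plücker meeting condition `ω₁ · v₂ + ω₂ · v₁ = 0` for the
lines associated to `(a, r₁)` and `(b, r₂)` is equivalent to the distance condition
`‖a - b‖ = (r₁ - r₂)²`. -/
theorem stmt2 {F : Type*} [Field F] (h2 : (2 : F) ≠ 0)
    (i : F) (hi : i ^ 2 = -1)
    (x1 y1 z1 x2 y2 z2 r1 r2 : F) :
    dot3 ((1, r1 - z1, x1 - i * y1) : F × F × F)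
        (r2 ^ 2 - x2 ^ 2 - y2 ^ 2 - z2 ^ 2, -(r2 + z2), x2 + i * y2) +
      dot3 ((1, r2 - z2, x2 - i * y2) : F × F × F)
        (r1 ^ 2 - x1 ^ 2 - y1 ^ 2 - z1 ^ 2, -(r1 + z1), x1 + i * y1) = 0 ↔
    (x1 - x2) ^ 2 + (y1 - y2) ^ 2 + (z1 - z2) ^ 2 = (r1 - r2) ^ 2 := by
  unfold dot3
  constructor <;> intro h
  · linear_combination -h - 2*y1*y2*hi
  · linear_combination -h - 2*y1*y2*hi
end

section
/- Let F be a field of odd characteristic where -1 is NOT a square, and let r1, r2 ∈ F be distinct and nonzero. Work over F[i]. Suppose u = (u1, u2, u3) ∈ F[i]^3 with u1 ≠ 0, and suppose there exist points a, a' ∈ F^3 (distinct) whose lines in C_{r1} both pass through u, and points b, b' ∈ F^3 (distinct) whose lines in C_{r2} both pass through u. Then writing α = u1⁻¹ - u1 and β = u1⁻¹ + u1, both β·r1 + (u3·u1⁻¹ - u2) ∈ F and β·r2 + (u3·u1⁻¹ - u2) ∈ F, and α ∈ F; derive a contradiction, i.e., such a configuration is impossible. -/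
/-!
Dividing the incidence equations of a point `(x, y, z)` of `F^3` in `C_r` by `u₁` gives
`2x = αz + βr + c` and `2iy = -(βz + αr + d)` with `α = u₁⁻¹ - u₁`, `β = u₁⁻¹ + u₁`.
Subtracting the equations of two distinct points in the same `C_r` shows `α ∈ F` and
`β ∈ iF`; subtracting those of points in `C_{r₁}` and `C_{r₂}` then puts `β (r₁ - r₂)` and
`α (r₁ - r₂)` in `F ∩ iF = 0`. So `α = β = 0`, which contradicts `α + β = 2u₁⁻¹`.
-/

/-- Standard cross product on triples. -/
def cross3 {K : Type*} [Field K] (u v : K × K × K) : K × K × K :=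
  (u.2.1 * v.2.2 - u.2.2 * v.2.1,
   u.2.2 * v.1 - u.1 * v.2.2,
   u.1 * v.2.1 - u.2.1 * v.1)

/-- The `ω`-part of the Plücker vector of the line of `(x,y,z)` in `C_r`. -/
def plOmega {K : Type*} [Field K] (i x y z r : K) : K × K × K :=
  (1, r - z, x - i * y)

/-- The `v`-part of the Plücker vector of the line of `(x,y,z)` in `C_r`. -/
def plV {K : Type*} [Field K] (i x y z r : K) : K × K × K :=
  (r ^ 2 - x ^ 2 - y ^ 2 - z ^ 2, -(r + z), x + i * y)

theorem two_mul_eq_of_plV_eq_cross3 {K : Type*} [Field K] {i x y z r : K} {u : K × K × K}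
    (hu : u.1 ≠ 0) (h : plV i x y z r = cross3 u (plOmega i x y z r)) :
    2 * x = (u.1⁻¹ - u.1) * z + (u.1⁻¹ + u.1) * r + (u.2.2 * u.1⁻¹ - u.2.1) ∧
      2 * i * y = -((u.1⁻¹ + u.1) * z + (u.1⁻¹ - u.1) * r + (u.2.2 * u.1⁻¹ + u.2.1)) := by
  simp only [plV, plOmega, cross3, Prod.mk.injEq] at h
  obtain ⟨-, h₂, h₃⟩ := h
  constructor
  · field_simp
    linear_combination h₂ + u.1 * h₃
  · field_simp
    linear_combination -h₂ + u.1 * h₃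

theorem RingHom.notMem_range_of_sq_eq_neg_one {F K : Type*} [CommRing F] [CommRing K]
    (f : F →+* K) (hf : Function.Injective f) (hsq : ¬∃ s : F, s ^ 2 = -1) {i : K}
    (hi : i ^ 2 = -1) : i ∉ Set.range f := by
  rintro ⟨s, rfl⟩
  exact hsq ⟨s, hf (by rw [map_pow, hi, map_neg, map_one])⟩

theorem RingHom.eq_zero_of_map_eq_map_mul {F K : Type*} [Field F] [Field K] (f : F →+* K)
    {i : K} (hi : i ∉ Set.range f) {c d : F} (h : f c = f d * i) : c = 0 ∧ d = 0 := by
  have hd : d = 0 := by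
    by_contra hd
    exact hi ⟨c / d, by rw [map_div₀, h, mul_div_cancel_left₀ _ ((map_ne_zero f).mpr hd)]⟩
  subst hd
  exact ⟨f.injective (by simpa using h), rfl⟩

section LineRelation

variable {F K : Type*} [Field F] [Field K] (f : F →+* K) (i α β c d : K)

/-- The incidence relations, divided by `u₁`, of the line of `p ∈ F^3` in `C_r`. -/
def LineRelation (r : F) (p : F × F × F) : Prop :=
  2 * f p.1 = α * f p.2.2 + β * f r + c ∧
    2 * i * f p.2.1 = -(β * f p.2.2 + α * f r + d)

variable {f i α β c d}

theorem LineRelation.exists_eq_map_of_ne (h2 : (2 : K) ≠ 0) (hi : i ≠ 0) {r : F}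
    {p q : F × F × F} (hpq : p ≠ q) (hp : LineRelation f i α β c d r p)
    (hq : LineRelation f i α β c d r q) : ∃ s t : F, α = f s ∧ β = f t * i := by
  obtain ⟨hpx, hpy⟩ := hp
  obtain ⟨hqx, hqy⟩ := hq
  have hz : f (p.2.2 - q.2.2) ≠ 0 := by
    refine (map_ne_zero f).mpr (sub_ne_zero.mpr fun hz => hpq ?_)
    have hx : f p.1 = f q.1 := mul_left_cancel₀ h2 (by rw [hpx, hqx, hz])
    have hy : f p.2.1 = f q.2.1 := mul_left_cancel₀ (mul_ne_zero h2 hi) (by rw [hpy, hqy, hz])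
    exact Prod.ext (f.injective hx) (Prod.ext (f.injective hy) hz)
  refine ⟨2 * (p.1 - q.1) / (p.2.2 - q.2.2), -(2 * (p.2.1 - q.2.1)) / (p.2.2 - q.2.2), ?_, ?_⟩
  · rw [map_div₀, eq_div_iff hz]
    simp only [map_mul, map_sub, map_ofNat]
    linear_combination hqx - hpx
  · rw [map_div₀, div_mul_eq_mul_div, eq_div_iff hz]
    simp only [map_mul, map_sub, map_neg, map_ofNat]
    linear_combination hpy - hqy

theorem LineRelation.eq_zero_of_ne (hi : i ∉ Set.range f) {s t : F} (hα : α = f s)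
    (hβ : β = f t * i) {r₁ r₂ : F} (hr : r₁ ≠ r₂) {p q : F × F × F}
    (hp : LineRelation f i α β c d r₁ p) (hq : LineRelation f i α β c d r₂ q) :
    α = 0 ∧ β = 0 := by
  obtain ⟨hpx, hpy⟩ := hp
  obtain ⟨hqx, hqy⟩ := hq
  have hr' : r₁ - r₂ ≠ 0 := sub_ne_zero.mpr hr
  have ht : t = 0 := by
    have h : f (2 * (p.1 - q.1) - s * (p.2.2 - q.2.2)) = f (t * (r₁ - r₂)) * i := by
      simp only [map_mul, map_sub, map_ofNat]
      linear_combination hpx - hqx + (f p.2.2 - f q.2.2) * hα + (f r₁ - f r₂) * hβ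
    exact (mul_eq_zero.mp (f.eq_zero_of_map_eq_map_mul hi h).2).resolve_right hr'
  have hβ0 : β = 0 := by rw [hβ, ht, map_zero, zero_mul]
  have hs : s = 0 := by
    have h : f (-(s * (r₁ - r₂))) = f (2 * (p.2.1 - q.2.1)) * i := by
      simp only [map_mul, map_sub, map_neg, map_ofNat]
      linear_combination hqy - hpy + (f r₁ - f r₂) * hα + (f p.2.2 - f q.2.2) * hβ0
    exact (mul_eq_zero.mp (neg_eq_zero.mp (f.eq_zero_of_map_eq_map_mul hi h).1)).resolve_right hr'
  exact ⟨by rw [hα, hs, map_zero], hβ0⟩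

end LineRelation

theorem stmt8_general {F K : Type*} [Field F] [Field K] (h2 : (2 : F) ≠ 0)
    (hsq : ¬∃ s : F, s ^ 2 = -1)
    (f : F →+* K) (i : K) (hi : i ^ 2 = -1)
    (r1 r2 : F) (hr : r1 ≠ r2)
    (u : K × K × K) (hu1 : u.1 ≠ 0)
    (a a' b : F × F × F) (haa : a ≠ a')
    (ha : plV i (f a.1) (f a.2.1) (f a.2.2) (f r1) =
      cross3 u (plOmega i (f a.1) (f a.2.1) (f a.2.2) (f r1)))
    (ha' : plV i (f a'.1) (f a'.2.1) (f a'.2.2) (f r1) =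
      cross3 u (plOmega i (f a'.1) (f a'.2.1) (f a'.2.2) (f r1)))
    (hb : plV i (f b.1) (f b.2.1) (f b.2.2) (f r2) =
      cross3 u (plOmega i (f b.1) (f b.2.1) (f b.2.2) (f r2))) :
    False := by
  have h2K : (2 : K) ≠ 0 := by rw [← map_ofNat f 2]; exact (map_ne_zero f).mpr h2
  have hiF : i ∉ Set.range f := f.notMem_range_of_sq_eq_neg_one f.injective hsq hi
  have hi0 : i ≠ 0 := fun h => hiF ⟨0, by rw [map_zero, h]⟩
  obtain ⟨s, t, hα, hβ⟩ := LineRelation.exists_eq_map_of_ne h2K hi0 haa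
    (two_mul_eq_of_plV_eq_cross3 hu1 ha) (two_mul_eq_of_plV_eq_cross3 hu1 ha')
  obtain ⟨hα0, hβ0⟩ := LineRelation.eq_zero_of_ne hiF hα hβ hr
    (two_mul_eq_of_plV_eq_cross3 hu1 ha) (two_mul_eq_of_plV_eq_cross3 hu1 hb)
  have h : 2 * u.1⁻¹ = 0 := by linear_combination hα0 + hβ0
  exact mul_ne_zero h2K (inv_ne_zero hu1) h

/-- Impossibility of bichromatic concurrency (second part of Lemma 2.6): over
`F[i]` with `-1` not a square in `F`, and `r1 ≠ r2` nonzero, there is no point `u`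
with `u1 ≠ 0` through which pass the lines of two distinct points of `F^3` in
`C_{r1}` and of two distinct points of `F^3` in `C_{r2}`. A line passes through `u`
iff its Plücker vector `(ω, v)` satisfies `v = u × ω`. -/
theorem stmt8 {F K : Type*} [Field F] [Field K] (h2 : (2 : F) ≠ 0)
    (hsq : ¬∃ s : F, s ^ 2 = -1)
    (f : F →+* K) (i : K) (hi : i ^ 2 = -1)
    (hK : ∀ z : K, ∃ a b : F, z = f a + f b * i)
    (r1 r2 : F) (hr : r1 ≠ r2) (hr1 : r1 ≠ 0) (hr2 : r2 ≠ 0)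
    (u : K × K × K) (hu1 : u.1 ≠ 0)
    (a a' b b' : F × F × F) (haa : a ≠ a') (hbb : b ≠ b')
    (ha : plV i (f a.1) (f a.2.1) (f a.2.2) (f r1) =
      cross3 u (plOmega i (f a.1) (f a.2.1) (f a.2.2) (f r1)))
    (ha' : plV i (f a'.1) (f a'.2.1) (f a'.2.2) (f r1) =
      cross3 u (plOmega i (f a'.1) (f a'.2.1) (f a'.2.2) (f r1)))
    (hb : plV i (f b.1) (f b.2.1) (f b.2.2) (f r2) =
      cross3 u (plOmega i (f b.1) (f b.2.1) (f b.2.2) (f r2)))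
    (hb' : plV i (f b'.1) (f b'.2.1) (f b'.2.2) (f r2) =
      cross3 u (plOmega i (f b'.1) (f b'.2.1) (f b'.2.2) (f r2))) :
    False :=
  stmt8_general h2 hsq f i hi r1 r2 hr u hu1 a a' b haa ha ha' hb
end

section
/- Let F be a field and let C be a smooth conic in the projective plane P^2 over F, with char F ≠ 2. Let q1, q2, q3 be three distinct points of C. Then the three tangent lines to C at q1, q2, q3 have no common point. -/
/-!
A common point `x` of the three tangent lines is `B`-orthogonal to `q₁, q₂, q₃`, where
`B u v = u ⬝ᵥ M *ᵥ v`, so by nondegeneracy it suffices that the `qᵢ` span `F³`. If `q₃ = a q₁ + b q₂`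
with `a, b ≠ 0`, then `0 = B q₃ q₃ = 2 a b B q₁ q₂`, so the plane spanned by `q₁, q₂` is totally
isotropic; but a nondegenerate form on `F³` has `dim W + dim W^⊥ = 3`, leaving no room for such
a plane.
-/

open Matrix
open LinearMap (BilinForm)

namespace LinearMap

theorem SeparatingRight.eq_zero_of_forall_apply_eq_zero {R M₁ M₂ M : Type*} [CommSemiring R]
    [AddCommMonoid M₁] [AddCommMonoid M₂] [AddCommMonoid M] [Module R M₁] [Module R M₂]
    [Module R M] {B : M₁ →ₗ[R] M₂ →ₗ[R] M} (hB : B.SeparatingRight) {ι : Type*} {v : ι → M₁}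
    (hv : Submodule.span R (Set.range v) = ⊤) {y : M₂} (hy : ∀ i, B (v i) y = 0) : y = 0 :=
  hB y fun x => LinearMap.congr_fun (ext_on_range hv (f := B.flip y) (g := 0) hy) x

namespace BilinForm

theorem IsSymm.apply_eq_zero_of_isotropic_smul_add_smul {R M : Type*} [CommRing R]
    [NoZeroDivisors R] [AddCommGroup M] [Module R M] {B : BilinForm R M} (hB : B.IsSymm)
    (h2 : (2 : R) ≠ 0) {u v : M} (hu : B u u = 0) (hv : B v v = 0) {a b : R} (ha : a ≠ 0)
    (hb : b ≠ 0) (hw : B (a • u + b • v) (a • u + b • v) = 0) : B u v = 0 := by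
  have hexpand : B (a • u + b • v) (a • u + b • v) = 2 * a * b * B u v := by
    simp only [map_add, map_smul, LinearMap.add_apply, LinearMap.smul_apply, smul_eq_mul, hu, hv,
      hB.eq v u]
    ring
  rw [hexpand] at hw
  simpa [h2, ha, hb] using hw

variable {K V : Type*} [Field K] [AddCommGroup V] [Module K V] {B : BilinForm K V}

theorem IsSymm.span_pair_le_orthogonal (hB : B.IsSymm) {u v : V} (hu : B u u = 0)
    (hv : B v v = 0) (huv : B u v = 0) :
    Submodule.span K {u, v} ≤ B.orthogonal (Submodule.span K {u, v}) := by
  intro x hx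
  rw [mem_orthogonal_iff]
  intro y hy
  obtain ⟨a, b, rfl⟩ := Submodule.mem_span_pair.mp hx
  obtain ⟨c, d, rfl⟩ := Submodule.mem_span_pair.mp hy
  simp [hu, hv, huv, hB.eq v u]

theorem two_mul_finrank_le_of_le_orthogonal [FiniteDimensional K V] (hB : B.Nondegenerate)
    {W : Submodule K V} (hW : W ≤ B.orthogonal W) :
    2 * Module.finrank K W ≤ Module.finrank K V := by
  have hle := Submodule.finrank_mono hW
  rw [finrank_orthogonal hB] at hle
  have := Submodule.finrank_le W
  omega

/-- Otherwise `span K {u, v}` would be a totally isotropic plane, which a nondegenerate form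
admits only in dimension at least four. -/
theorem notMem_span_pair_of_isotropic [FiniteDimensional K V] (hdim : Module.finrank K V ≤ 3)
    (hB : B.Nondegenerate) (hS : B.IsSymm) (h2 : (2 : K) ≠ 0) {u v w : V}
    (huv : LinearIndependent K ![u, v]) (hu : B u u = 0) (hv : B v v = 0) (hw : B w w = 0)
    (hwu : ∀ c : K, w ≠ c • u) (hwv : ∀ c : K, w ≠ c • v) :
    w ∉ Submodule.span K {u, v} := by
  intro hmem
  obtain ⟨a, b, rfl⟩ := Submodule.mem_span_pair.mp hmem
  have ha : a ≠ 0 := by rintro rfl; exact hwv b (by simp)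
  have hb : b ≠ 0 := by rintro rfl; exact hwu a (by simp)
  have hplane := two_mul_finrank_le_of_le_orthogonal hB <| hS.span_pair_le_orthogonal hu hv <|
    hS.apply_eq_zero_of_isotropic_smul_add_smul h2 hu hv ha hb hw
  have hrank := finrank_span_eq_card huv
  rw [range_cons_cons_empty, Fintype.card_fin] at hrank
  omega

end BilinForm

end LinearMap

open LinearMap.BilinForm

theorem stmt12_general {F : Type*} [Field F] (h2 : (2 : F) ≠ 0)
    (M : Matrix (Fin 3) (Fin 3) F) (hsymm : M.IsSymm) (hM : IsUnit M.det)
    (q1 q2 q3 : Fin 3 → F)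
    (hn1 : q1 ≠ 0)
    (hq1 : q1 ⬝ᵥ M.mulVec q1 = 0) (hq2 : q2 ⬝ᵥ M.mulVec q2 = 0)
    (hq3 : q3 ⬝ᵥ M.mulVec q3 = 0)
    (hd12 : ∀ c : F, q2 ≠ c • q1) (hd13 : ∀ c : F, q3 ≠ c • q1)
    (hd23 : ∀ c : F, q3 ≠ c • q2) :
    ∀ x : Fin 3 → F,
      q1 ⬝ᵥ M.mulVec x = 0 → q2 ⬝ᵥ M.mulVec x = 0 → q3 ⬝ᵥ M.mulVec x = 0 →
      x = 0 := by
  have hB : M.toBilin'.Nondegenerate := (nondegenerate_of_det_ne_zero hM.ne_zero).toBilin'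
  have hS : M.toBilin'.IsSymm := isSymm_toBilin'_iff_isSymm.mpr hsymm
  simp only [← toBilin'_apply'] at hq1 hq2 hq3 ⊢
  have h12 : LinearIndependent F ![q1, q2] :=
    (LinearIndependent.pair_iff' hn1).mpr fun c h => hd12 c h.symm
  have h123 : LinearIndependent F (Fin.snoc ![q1, q2] q3 : Fin 3 → Fin 3 → F) :=
    h12.finSnoc <| by
      simpa [Set.pair_comm] using
        notMem_span_pair_of_isotropic (by simp) hB hS h2 h12 hq1 hq2 hq3 hd13 hd23
  have hspan := h123.span_eq_top_of_card_eq_finrank (by simp)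
  intro x hx1 hx2 hx3
  refine hB.2.eq_zero_of_forall_apply_eq_zero hspan fun i => ?_
  fin_cases i <;> assumption

/-- Three distinct points of a smooth conic in `P^2` (the zero set of a
nondegenerate quadratic form in three variables, char `F ≠ 2`) have tangent lines
with no common point. The conic is given by an invertible symmetric matrix `M`,
a point `q` of `P^2` lies on the conic when `q ⬝ᵥ M q = 0`, and the tangent line at
such a `q` is `{x : q ⬝ᵥ M x = 0}` (the polar line). -/
theorem stmt12 {F : Type*} [Field F] (h2 : (2 : F) ≠ 0)
    (M : Matrix (Fin 3) (Fin 3) F) (hsymm : M.IsSymm) (hM : IsUnit M.det)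
    (q1 q2 q3 : Fin 3 → F)
    (hn1 : q1 ≠ 0) (hn2 : q2 ≠ 0) (hn3 : q3 ≠ 0)
    (hq1 : q1 ⬝ᵥ M.mulVec q1 = 0) (hq2 : q2 ⬝ᵥ M.mulVec q2 = 0)
    (hq3 : q3 ⬝ᵥ M.mulVec q3 = 0)
    (hd12 : ∀ c : F, q2 ≠ c • q1) (hd13 : ∀ c : F, q3 ≠ c • q1)
    (hd23 : ∀ c : F, q3 ≠ c • q2) :
    ∀ x : Fin 3 → F,
      q1 ⬝ᵥ M.mulVec x = 0 → q2 ⬝ᵥ M.mulVec x = 0 → q3 ⬝ᵥ M.mulVec x = 0 →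
      x = 0 :=
  stmt12_general h2 M hsymm hM q1 q2 q3 hn1 hq1 hq2 hq3 hd12 hd13 hd23
end

section
/- Let F be a field of odd characteristic and n a positive even square number. Suppose there exists a nonzero isotropic vector ω ∈ F^3 (ω·ω = 0, ω ≠ 0) and |F| ≥ √n. Then there exists a set A ⊂ F^3 of n points, lying on at most √n isotropic lines (all parallel to ω), such that the number of ordered pairs (a, b) ∈ A × A with ||a - b|| = 0 and a ≠ b is at least √n · (√n)(√n - 1) = n(√n - 1) ≥ n^{3/2}/2. -/
lemma indep_vec {F : Type*} [Field F] (ω : F × F × F) (hω0 : ω ≠ 0) :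
    ∃ v : F × F × F, ∀ c d : F, c • v + d • ω = 0 → c = 0 ∧ d = 0 := by
  obtain ⟨x, y, z⟩ := ω
  have h : x ≠ 0 ∨ y ≠ 0 ∨ z ≠ 0 := by
    by_contra h
    push_neg at h
    exact hω0 (by simp [h.1, h.2.1, h.2.2, Prod.ext_iff])
  rcases h with hx | hy | hz
  · refine ⟨(0, 1, 0), fun c d h => ?_⟩
    simp only [Prod.ext_iff, Prod.smul_mk, smul_eq_mul, Prod.mk_add_mk,
      Prod.fst_zero, Prod.snd_zero, Prod.mk_eq_zero, mul_zero, zero_add, mul_one] at h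
    have hd : d = 0 := by
      rcases mul_eq_zero.mp h.1 with h' | h'
      · exact h'
      · exact absurd h' hx
    refine ⟨?_, hd⟩
    have := h.2.1
    rw [hd] at this
    simpa using this
  · refine ⟨(1, 0, 0), fun c d h => ?_⟩
    simp only [Prod.ext_iff, Prod.smul_mk, smul_eq_mul, Prod.mk_add_mk,
      Prod.fst_zero, Prod.snd_zero, Prod.mk_eq_zero, mul_zero, zero_add, mul_one] at h
    have hd : d = 0 := by
      rcases mul_eq_zero.mp h.2.1 with h' | h'
      · exact h'
      · exact absurd h' hy
    refine ⟨?_, hd⟩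
    have := h.1
    rw [hd] at this
    simpa using this
  · refine ⟨(1, 0, 0), fun c d h => ?_⟩
    simp only [Prod.ext_iff, Prod.smul_mk, smul_eq_mul, Prod.mk_add_mk,
      Prod.fst_zero, Prod.snd_zero, Prod.mk_eq_zero, mul_zero, zero_add, mul_one] at h
    have hd : d = 0 := by
      rcases mul_eq_zero.mp h.2.2 with h' | h'
      · exact h'
      · exact absurd h' hz
    refine ⟨?_, hd⟩
    have := h.1
    rw [hd] at this
    simpa using this

lemma dot3_smul_self {F : Type*} [Field F] (t : F) (ω : F × F × F) :
    dot3 (t • ω) (t • ω) = t ^ 2 * dot3 ω ω := by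
  simp only [dot3, Prod.smul_fst, Prod.smul_snd, smul_eq_mul]
  ring

/-- The lower-bound construction for the zero distance: if `F^3` contains a nonzero
isotropic vector `ω` and `|F| ≥ √n`, with `n = m²` a positive even square, then
there is a set `A` of `n` points, supported on at most `m = √n` lines parallel to
`ω`, spanning at least `n(√n - 1) ≥ n^{3/2}/2` ordered pairs at distance zero. -/
theorem stmt18 {F : Type*} [Field F] (h2 : (2 : F) ≠ 0)
    (m n : ℕ) (hn : n = m ^ 2) (hpos : 0 < n) (heven : Even n)
    (hF : ∃ f : Fin m → F, Function.Injective f)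
    (ω : F × F × F) (hω0 : ω ≠ 0) (hiso : dot3 ω ω = 0) :
    ∃ A : Finset (F × F × F), A.card = n ∧
      (∃ B : Finset (F × F × F), B.card ≤ m ∧
        ∀ a ∈ A, ∃ p ∈ B, ∃ t : F, a = p + t • ω) ∧
      n * (m - 1) ≤ Set.ncard {x : (F × F × F) × (F × F × F) |
        x.1 ∈ A ∧ x.2 ∈ A ∧ x.1 ≠ x.2 ∧ dot3 (x.1 - x.2) (x.1 - x.2) = 0} ∧
      m ^ 3 ≤ 2 * Set.ncard {x : (F × F × F) × (F × F × F) |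
        x.1 ∈ A ∧ x.2 ∈ A ∧ x.1 ≠ x.2 ∧ dot3 (x.1 - x.2) (x.1 - x.2) = 0} := by
  classical
  obtain ⟨f, hf⟩ := hF
  obtain ⟨v, hv⟩ := indep_vec ω hω0
  have hm0 : m ≠ 0 := by rintro rfl; simp [hn] at hpos
  have hmeven : Even m := by
    rw [hn, Nat.even_pow] at heven
    exact heven.1
  have hm2 : 2 ≤ m := by
    rcases hmeven with ⟨k, hk⟩
    omega
  set g : Fin m × Fin m → F × F × F := fun p => f p.1 • v + f p.2 • ω with hg
  have hginj : Function.Injective g := by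
    rintro ⟨i, j⟩ ⟨i', j'⟩ h
    simp only [hg] at h
    have hz : (f i - f i') • v + (f j - f j') • ω = 0 := by
      rw [sub_smul, sub_smul, sub_add_sub_comm, sub_eq_zero]
      exact h
    obtain ⟨h1, h3⟩ := hv _ _ hz
    have hi : i = i' := hf (sub_eq_zero.mp h1)
    have hj : j = j' := hf (sub_eq_zero.mp h3)
    simp [hi, hj]
  set A : Finset (F × F × F) := Finset.image g Finset.univ with hA
  refine ⟨A, ?_, ?_, ?_⟩
  · rw [hA, Finset.card_image_of_injective _ hginj, Finset.card_univ]
    simp [hn, sq]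
  · refine ⟨Finset.image (fun i : Fin m => f i • v) Finset.univ, ?_, ?_⟩
    · exact (Finset.card_image_le).trans (by simp)
    · intro a ha
      rw [hA, Finset.mem_image] at ha
      obtain ⟨⟨i, j⟩, _, rfl⟩ := ha
      exact ⟨f i • v, Finset.mem_image_of_mem _ (Finset.mem_univ i), f j, rfl⟩
  -- count pairs
  set P : Set ((F × F × F) × (F × F × F)) := {x | x.1 ∈ A ∧ x.2 ∈ A ∧ x.1 ≠ x.2 ∧
      dot3 (x.1 - x.2) (x.1 - x.2) = 0} with hP
  have hPsub : P ⊆ (A : Set _) ×ˢ (A : Set _) := fun x hx => ⟨hx.1, hx.2.1⟩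
  have hPfin : P.Finite := Set.Finite.subset (Set.toFinite _) hPsub
  set h : Fin m × Fin m × Fin m → (F × F × F) × (F × F × F) :=
    fun q => (g (q.1, q.2.1), g (q.1, q.2.2)) with hh
  have hhinj : Function.Injective h := by
    rintro ⟨i, j, j'⟩ ⟨a, b, b'⟩ heq
    have e1 := hginj (congrArg Prod.fst heq)
    have e2 := hginj (congrArg Prod.snd heq)
    simp only [Prod.mk.injEq] at e1 e2
    simp [e1.1, e1.2, e2.2, Prod.ext_iff]
  set D : Finset (Fin m × Fin m × Fin m) :=
    Finset.univ ×ˢ Finset.univ.offDiag with hD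
  have hDcard : D.card = m * (m * m - m) := by
    rw [hD, Finset.card_product, Finset.offDiag_card]
    simp
  set T : Finset ((F × F × F) × (F × F × F)) := D.image h with hT
  have hTcard : T.card = m * (m * m - m) := by
    rw [hT, Finset.card_image_of_injective _ hhinj, hDcard]
  have hTsub : (T : Set _) ⊆ P := by
    intro x hx
    simp only [hT, Finset.coe_image, Set.mem_image, Finset.mem_coe] at hx
    obtain ⟨⟨i, j, j'⟩, hq, rfl⟩ := hx
    have hjj' : j ≠ j' := by
      rw [hD, Finset.mem_product, Finset.mem_offDiag] at hq
      exact hq.2.2.2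
    refine ⟨?_, ?_, ?_, ?_⟩
    · exact Finset.mem_image_of_mem _ (Finset.mem_univ _)
    · exact Finset.mem_image_of_mem _ (Finset.mem_univ _)
    · intro hc
      have := hginj hc
      simp only [Prod.mk.injEq] at this
      exact hjj' this.2
    · have : g (i, j) - g (i, j') = (f j - f j') • ω := by
        simp only [hg]
        rw [sub_smul]
        abel
      rw [hh]
      simp only
      rw [this, dot3_smul_self, hiso, mul_zero]
  have hPn : m * (m * m - m) ≤ P.ncard := by
    calc m * (m * m - m) = T.card := hTcard.symm
    _ = (T : Set _).ncard := by rw [Set.ncard_coe_finset]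
    _ ≤ P.ncard := Set.ncard_le_ncard hTsub hPfin
  obtain ⟨k, hk⟩ : ∃ k, m = k + 2 := ⟨m - 2, by omega⟩
  have hsub : (k + 2) * (k + 2) - (k + 2) = (k + 2) * (k + 1) := by
    have : (k + 2) * (k + 2) = (k + 2) * (k + 1) + (k + 2) := by ring
    omega
  constructor
  · refine le_trans (le_of_eq ?_) hPn
    subst hn hk
    rw [hsub, show k + 2 - 1 = k + 1 from by omega]
    ring
  · have hle : m ^ 3 ≤ 2 * (m * (m * m - m)) := by
      subst hk
      rw [hsub]
      nlinarith [sq_nonneg k]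
    exact hle.trans (Nat.mul_le_mul_left 2 hPn)
end
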